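/- Let R be a ring and a ∈ R regular. If (1) aR/ar(a²) is a projective right R-module, and (2) ar(a²) ≅ R/(r(a) + aR) as right R-modules, then a is special clean: there is an idempotent e ∈ R such that a - e is a unit and aR ∩ eR = 0. -/

import Mathlib

noncomputable section

namespace SepExchange

variable (R : Type) [Ring R]

/-- The right annihilator `r(a)` as a right `R`-submodule of `R`. -/
def rAnn (a : R) : Submodule Rᵐᵒᵖ R where
  carrier := {x | a * x = 0}
  add_mem' := by intro x y hx hy; simp_all [Set.mem_setOf_eq, mul_add]
  zero_mem' := by simp
  smul_mem' := by
    intro c x hx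
    simp only [Set.mem_setOf_eq, MulOpposite.smul_eq_mul_unop] at *
    rw [← mul_assoc, hx, zero_mul]

/-- The principal right ideal `aR` as a right `R`-submodule of `R`. -/
def rIdeal (a : R) : Submodule Rᵐᵒᵖ R := Submodule.span Rᵐᵒᵖ {a}

/-- The right `R`-module `a·r(a²) = {a*t : a²*t = 0}`. -/
def arAnn2 (a : R) : Submodule Rᵐᵒᵖ R where
  carrier := {x | ∃ t, x = a * t ∧ a ^ 2 * t = 0}
  add_mem' := by
    rintro x y ⟨t1, rfl, h1⟩ ⟨t2, rfl, h2⟩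
    exact ⟨t1 + t2, by rw [mul_add], by rw [mul_add, h1, h2, add_zero]⟩
  zero_mem' := ⟨0, by simp, by simp⟩
  smul_mem' := by
    rintro c x ⟨t, rfl, ht⟩
    refine ⟨t * c.unop, ?_, ?_⟩
    · simp only [MulOpposite.smul_eq_mul_unop, mul_assoc]
    · rw [← mul_assoc, ht, zero_mul]

/-- `R` is an exchange ring: for each `a` there is an idempotent `e ∈ aR`
with `1 - e ∈ (1-a)R`. -/
def ExchangeRing : Prop :=
  ∀ a : R, ∃ e : R, IsIdempotentElem e ∧ (∃ r, e = a * r) ∧ (∃ s, (1 : R) - e = (1 - a) * s)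

/-- `R` is separative: `A⊕A ≅ A⊕B ≅ B⊕B ⟹ A ≅ B` for finitely generated
projective right `R`-modules. -/
def Separative : Prop :=
  ∀ (A B : Type) [AddCommGroup A] [Module Rᵐᵒᵖ A] [AddCommGroup B] [Module Rᵐᵒᵖ B],
    Module.Finite Rᵐᵒᵖ A → Module.Projective Rᵐᵒᵖ A →
    Module.Finite Rᵐᵒᵖ B → Module.Projective Rᵐᵒᵖ B →
    Nonempty ((A × A) ≃ₗ[Rᵐᵒᵖ] (A × B)) → Nonempty ((A × B) ≃ₗ[Rᵐᵒᵖ] (B × B)) →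
    Nonempty (A ≃ₗ[Rᵐᵒᵖ] B)

/-- `a` is unit-regular. -/
def IsUnitRegular (a : R) : Prop := ∃ u : Rˣ, a = a * (u : R) * a

/-- `a` is special clean: there is an idempotent `e` with `a - e` a unit and
`aR ∩ eR = 0`. -/
def IsSpecialClean (a : R) : Prop :=
  ∃ e : R, IsIdempotentElem e ∧ IsUnit (a - e) ∧ rIdeal R a ⊓ rIdeal R e = ⊥

/-- `A ≲⊕ B`: `A` is isomorphic to a direct summand of `B` (right `R`-modules). -/
def SummandOf (A B : Type) [AddCommGroup A] [Module Rᵐᵒᵖ A]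
    [AddCommGroup B] [Module Rᵐᵒᵖ B] : Prop :=
  ∃ N N' : Submodule Rᵐᵒᵖ B, IsCompl N N' ∧ Nonempty (A ≃ₗ[Rᵐᵒᵖ] ↥N)

/-- `A ∝ B`: `A` is isomorphic to a direct summand of a finite direct sum of
copies of `B`. -/
def Propto (A B : Type) [AddCommGroup A] [Module Rᵐᵒᵖ A]
    [AddCommGroup B] [Module Rᵐᵒᵖ B] : Prop :=
  ∃ m : ℕ, 0 < m ∧ SummandOf R A (Fin m → B)

end SepExchange

/-!
Let `K = r(a)`, `Z = R/aR` and `p : K → Z` the canonical map: its kernel is `ar(a²)` and its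
cokernel is `R/(r(a) + aR)`. As `a = axa`, `R = xaR ⊕ K`, and for a map `Φ : K → R` with
`Φ k - k ∈ xaR` inducing an isomorphism `K ≅ Z`, the idempotent `e = Φ(1 - xa)` makes `a`
special clean: `a - e` acts as `a : xaR ≅ aR` and as `-Φ : K ≅ eR`, and `R = aR ⊕ eR`.
Such a `Φ = incl + xa·θ` exists because `Z` and `ker p` are projective and `coker p ≅ ker p`:
then `K = ker p ⊕ V` with `V ≅ im p`, and `θ` carries `ker p`, through a lift of
`ker p ≅ coker p`, onto a complement of `im p` in `Z`.
-/

open Function Module LinearMap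

section Projective

variable {A M Q : Type*} [Ring A] [AddCommGroup M] [Module A M] [AddCommGroup Q] [Module A Q]

theorem LinearMap.exists_retraction_ker (g : M →ₗ[A] Q) [Projective A (range g)] :
    ∃ ρ : M →ₗ[A] ker g, ∀ c : ker g, ρ c = c := by
  obtain ⟨σ, hσ⟩ :=
    projective_lifting_property g.rangeRestrict LinearMap.id g.surjective_rangeRestrict
  have hgσ (v : range g) : g (σ v) = v := congrArg Subtype.val (LinearMap.congr_fun hσ v)
  refine ⟨codRestrict _ (LinearMap.id - σ ∘ₗ g.rangeRestrict) fun m => ?_, fun c => ?_⟩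
  · simp [hgσ]
  · have : g.rangeRestrict c = 0 := Subtype.ext c.2
    ext
    simp [this]

theorem Submodule.projective_of_projective_quotient (N : Submodule A M) [Projective A M]
    [Projective A (M ⧸ N)] : Projective A N := by
  have : Projective A (range N.mkQ) := .of_equiv (LinearEquiv.ofTop _ N.range_mkQ).symm
  obtain ⟨ρ, hρ⟩ := N.mkQ.exists_retraction_ker
  have : Projective A (ker N.mkQ) := .of_split (ker N.mkQ).subtype ρ (LinearMap.ext hρ)
  exact .of_equiv (LinearEquiv.ofEq _ _ N.ker_mkQ)

end Projective

section Perturbation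

variable {A K X Z : Type*} [Ring A] [AddCommGroup K] [Module A K] [AddCommGroup X] [Module A X]
  [AddCommGroup Z] [Module A Z]

theorem LinearMap.exists_bijective_add_comp (p : K →ₗ[A] Z) (q : X →ₗ[A] Z) [Projective A Z]
    [Projective A (ker p)] (hpq : range p ⊔ range q = ⊤)
    (κ : (Z ⧸ range p) ≃ₗ[A] ker p) : ∃ θ : K →ₗ[A] X, Bijective (p + q ∘ₗ θ) := by
  have : Projective A (Z ⧸ range p) := .of_equiv κ.symm
  have : Projective A (range p) := (range p).projective_of_projective_quotient
  obtain ⟨ρ, hρ⟩ := p.exists_retraction_ker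
  have hp (k : K) : (Submodule.Quotient.mk (p k) : Z ⧸ range p) = 0 :=
    (Submodule.Quotient.mk_eq_zero _).mpr (mem_range_self p k)
  set μ : X →ₗ[A] ker p := κ.toLinearMap ∘ₗ (range p).mkQ ∘ₗ q
  have hμ : Surjective μ := by
    intro c
    obtain ⟨z, hz⟩ := (range p).mkQ_surjective (κ.symm c)
    obtain ⟨_, ⟨k, rfl⟩, _, ⟨y, rfl⟩, rfl⟩ :=
      Submodule.mem_sup.mp (hpq ▸ Submodule.mem_top (x := z))
    refine ⟨y, ?_⟩
    rw [← κ.apply_symm_apply c, ← hz]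
    simp [μ, hp]
  obtain ⟨σ, hσ⟩ := projective_lifting_property μ LinearMap.id hμ
  have hμσ (c : ker p) : μ (σ c) = c := LinearMap.congr_fun hσ c
  set Ψ := p + q ∘ₗ σ ∘ₗ ρ
  have hΨ (k : K) : κ ((range p).mkQ (Ψ k)) = ρ k := by
    simp only [Ψ, LinearMap.add_apply, LinearMap.comp_apply, Submodule.mkQ_apply,
      Submodule.Quotient.mk_add, hp, zero_add]
    exact hμσ (ρ k)
  have hΨ_ker (c : ker p) : Ψ c = q (σ c) := by simp [Ψ, hρ]
  have hΨ_ρ (k : K) (hk : ρ k = 0) : Ψ k = p k := by simp [Ψ, hk]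
  refine ⟨σ ∘ₗ ρ, (injective_iff_map_eq_zero Ψ).mpr fun k hk => ?_, fun z => ?_⟩
  · have hρk : ρ k = 0 := by simpa [hk] using (hΨ k).symm
    have hk' : k ∈ ker p := by simpa [hΨ_ρ k hρk] using hk
    simpa [hρ ⟨k, hk'⟩] using congrArg Subtype.val hρk
  · set c := κ ((range p).mkQ z)
    obtain ⟨k, hk⟩ : z - q (σ c) ∈ range p := by
      rw [← Submodule.Quotient.mk_eq_zero, Submodule.Quotient.mk_sub, sub_eq_zero]
      exact κ.injective (hμσ c).symm
    have hρ_sub : ρ (k - ρ k) = 0 := by simp [hρ]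
    refine ⟨c + (k - ρ k), ?_⟩
    rw [map_add, hΨ_ker, hΨ_ρ _ hρ_sub, map_sub, (ρ k).2, sub_zero, hk, add_sub_cancel]

end Perturbation

namespace SepExchange

open MulOpposite

variable {R : Type} [Ring R] {a x e : R}

instance : Projective Rᵐᵒᵖ R := .of_equiv (opLinearEquiv Rᵐᵒᵖ).symm

theorem mem_rIdeal {y : R} : y ∈ rIdeal R a ↔ ∃ t, a * t = y := by
  rw [rIdeal, Submodule.mem_span_singleton, op_surjective.exists]
  rfl

theorem arAnn2_eq_inf (a : R) : arAnn2 R a = rIdeal R a ⊓ rAnn R a := by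
  ext y
  rw [Submodule.mem_inf, mem_rIdeal]
  show (∃ t, y = a * t ∧ a ^ 2 * t = 0) ↔ _ ∧ a * y = 0
  constructor
  · rintro ⟨t, rfl, ht⟩
    exact ⟨⟨t, rfl⟩, by rwa [← mul_assoc, ← sq]⟩
  · rintro ⟨⟨t, rfl⟩, ht⟩
    exact ⟨t, rfl, by rwa [sq, mul_assoc]⟩

theorem isIdempotentElem_mul (hxa : a * x * a = a) : IsIdempotentElem (x * a) := by
  rw [IsIdempotentElem, mul_assoc, ← mul_assoc a, hxa]

theorem one_sub_mul_mem_rAnn (hxa : a * x * a = a) (r : R) : (1 - x * a) * r ∈ rAnn R a := by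
  show a * ((1 - x * a) * r) = 0
  rw [← mul_assoc, mul_sub, mul_one, ← mul_assoc, hxa, sub_self, zero_mul]

theorem one_sub_mul_of_mem_rAnn {k : R} (hk : k ∈ rAnn R a) : (1 - x * a) * k = k := by
  rw [sub_mul, one_mul, mul_assoc, show a * k = 0 from hk, mul_zero, sub_zero]

theorem isSpecialClean_of_complement (hxa : a * x * a = a) (he : e * (1 - x * a) = e)
    (hf : (1 - x * a) * e = 1 - x * a) (hdisj : ∀ s t, a * s = e * t → a * s = 0)
    (hspan : ∃ s t, a * s + e * t = 1) : IsSpecialClean R a := by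
  set f := 1 - x * a
  have haf : a * f = 0 := by rw [mul_sub, mul_one, ← mul_assoc, hxa, sub_self]
  have hexa : e * (x * a) = 0 := by
    rw [← he, mul_assoc, (isIdempotentElem_mul hxa).one_sub_mul_self, mul_zero]
  have hcancel (r : R) (hr : (a - e) * r = 0) : r = 0 := by
    have hare : a * r = e * r := sub_eq_zero.mp (by rwa [← sub_mul])
    have har : a * r = 0 := hdisj r r hare
    have hfr : f * r = 0 := by rw [← hf, mul_assoc, ← hare, har, mul_zero]
    calc r = x * (a * r) + f * r := by rw [← mul_assoc, ← add_mul, add_sub_cancel, one_mul]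
      _ = 0 := by rw [har, hfr, mul_zero, add_zero]
  obtain ⟨s, t, hst⟩ := hspan
  -- `a - e` sends `x a s` to `a s` and `f t` to `-e t`
  have hv : (a - e) * (x * a * s - f * t) = 1 := by
    calc (a - e) * (x * a * s - f * t)
        = a * x * a * s - e * (x * a) * s - a * f * t + e * f * t := by noncomm_ring
      _ = 1 := by rw [hxa, hexa, haf, he, ← hst]; noncomm_ring
  refine ⟨e, ?_, ?_, ?_⟩
  · calc e * e = e * f * e := by rw [he]
      _ = e := by rw [mul_assoc, hf, he]
  · refine ⟨⟨a - e, _, hv, sub_eq_zero.mp (hcancel _ ?_)⟩, rfl⟩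
    rw [mul_sub, ← mul_assoc, hv, one_mul, mul_one, sub_self]
  · refine eq_bot_iff.mpr fun m ⟨hma, hme⟩ => ?_
    obtain ⟨s, rfl⟩ := mem_rIdeal.mp hma
    obtain ⟨t, ht⟩ := mem_rIdeal.mp hme
    exact (Submodule.mem_bot _).mpr (hdisj s t ht.symm)

theorem isSpecialClean_of_bijective (hxa : a * x * a = a) (Φ : rAnn R a →ₗ[Rᵐᵒᵖ] R)
    (hΦ : ∀ k, (1 - x * a) * Φ k = k) (hbij : Bijective ((rIdeal R a).mkQ ∘ₗ Φ)) :
    IsSpecialClean R a := by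
  set f : rAnn R a := ⟨1 - x * a, by simpa using one_sub_mul_mem_rAnn hxa 1⟩
  have hΦf (k : rAnn R a) : Φ k = Φ f * k := by
    have hk : k = op (k : R) • f := Subtype.ext (one_sub_mul_of_mem_rAnn k.2).symm
    calc Φ k = Φ (op (k : R) • f) := congrArg Φ hk
      _ = Φ f * k := map_smul Φ _ _
  refine isSpecialClean_of_complement hxa (hΦf f).symm (hΦ f) (fun s t hst => ?_) ?_
  · have hzero : (rIdeal R a).mkQ (Φ (op t • f)) = 0 := by
      rw [map_smul, smul_eq_mul_unop, unop_op, ← hst, Submodule.mkQ_apply,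
        Submodule.Quotient.mk_eq_zero]
      exact mem_rIdeal.mpr ⟨s, rfl⟩
    rw [hst, ← unop_op t, ← smul_eq_mul_unop, ← map_smul,
      hbij.1 (hzero.trans (map_zero _).symm), map_zero]
  · obtain ⟨k, hk⟩ := hbij.2 ((rIdeal R a).mkQ 1)
    obtain ⟨s, hs⟩ := mem_rIdeal.mp ((Submodule.Quotient.eq _).mp hk.symm)
    exact ⟨s, k, by rw [hs, ← hΦf, sub_add_cancel]⟩

def rAnnToQuotient (a : R) : rAnn R a →ₗ[Rᵐᵒᵖ] R ⧸ rIdeal R a :=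
  (rIdeal R a).mkQ ∘ₗ (rAnn R a).subtype

def kerRAnnToQuotientEquiv (a : R) : ker (rAnnToQuotient a) ≃ₗ[Rᵐᵒᵖ] arAnn2 R a :=
  (LinearEquiv.ofEq _ _ <| by
      rw [rAnnToQuotient, ker_comp, Submodule.ker_mkQ, arAnn2_eq_inf, Submodule.comap_inf,
        Submodule.comap_subtype_self, inf_top_eq]).trans
    (Submodule.comapSubtypeEquivOfLe ((arAnn2_eq_inf a).trans_le inf_le_right))

def quotientRangeRAnnToQuotientEquiv (a : R) :
    ((R ⧸ rIdeal R a) ⧸ range (rAnnToQuotient a)) ≃ₗ[Rᵐᵒᵖ]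
      R ⧸ (rAnn R a ⊔ rIdeal R a) :=
  (Submodule.quotEquivOfEq _ _ <| by
      rw [rAnnToQuotient, range_comp, Submodule.range_subtype]).trans
    ((Submodule.quotientQuotientEquivQuotientSup _ _).trans
      (Submodule.quotEquivOfEq _ _ (sup_comm _ _)))

theorem range_rAnnToQuotient_sup (hxa : a * x * a = a) :
    range (rAnnToQuotient a) ⊔ range ((rIdeal R a).mkQ ∘ₗ mulLeft Rᵐᵒᵖ (x * a)) = ⊤ := by
  refine eq_top_iff.mpr fun z _ => ?_
  obtain ⟨r, rfl⟩ := (rIdeal R a).mkQ_surjective z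
  refine Submodule.mem_sup.mpr
    ⟨_, ⟨⟨_, one_sub_mul_mem_rAnn hxa r⟩, rfl⟩, _, ⟨r, rfl⟩, ?_⟩
  show (rIdeal R a).mkQ ((1 - x * a) * r) + (rIdeal R a).mkQ (x * a * r) = (rIdeal R a).mkQ r
  rw [← map_add, ← add_mul, sub_add_cancel, one_mul]

theorem projective_quotient_rIdeal (hxa : a * x * a = a) :
    Projective Rᵐᵒᵖ (R ⧸ rIdeal R a) := by
  have hle : rIdeal R a ≤ ker (mulLeft Rᵐᵒᵖ (1 - a * x)) := by
    rw [rIdeal, Submodule.span_singleton_le_iff_mem, mem_ker, mulLeft_apply, sub_mul, one_mul,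
      hxa, sub_self]
  refine .of_split ((rIdeal R a).liftQ _ hle) (rIdeal R a).mkQ
    (Submodule.linearMap_qext _ (LinearMap.ext fun r => ?_))
  simp only [LinearMap.comp_apply, Submodule.mkQ_apply, Submodule.liftQ_apply, mulLeft_apply,
    id_coe, id_eq]
  rw [Submodule.Quotient.eq, sub_mul, one_mul, sub_sub_cancel_left, neg_mem_iff, mul_assoc]
  exact mem_rIdeal.mpr ⟨_, rfl⟩

theorem projective_arAnn2 (hxa : a * x * a = a)
    [Projective Rᵐᵒᵖ (rIdeal R a ⧸ (arAnn2 R a).comap (rIdeal R a).subtype)] :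
    Projective Rᵐᵒᵖ (arAnn2 R a) := by
  have := projective_quotient_rIdeal hxa
  have := (rIdeal R a).projective_of_projective_quotient
  have := ((arAnn2 R a).comap (rIdeal R a).subtype).projective_of_projective_quotient
  exact .of_equiv (Submodule.comapSubtypeEquivOfLe ((arAnn2_eq_inf a).trans_le inf_le_left))

end SepExchange

open SepExchange in
/-- Lemma 3.2: if `a` is regular, `aR/ar(a²)` is projective and
`ar(a²) ≅ R/(r(a)+aR)`, then `a` is special clean. -/
theorem stmt13 (R : Type) [Ring R] (a x : R) (ha : a = a * x * a)
    (h1 : Module.Projective Rᵐᵒᵖ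
      (↥(rIdeal R a) ⧸ (arAnn2 R a).comap (rIdeal R a).subtype))
    (h2 : Nonempty (↥(arAnn2 R a) ≃ₗ[Rᵐᵒᵖ] (R ⧸ (rAnn R a ⊔ rIdeal R a)))) :
    IsSpecialClean R a := by
  obtain ⟨κ⟩ := h2
  have := projective_quotient_rIdeal ha.symm
  have := projective_arAnn2 ha.symm
  have : Projective Rᵐᵒᵖ (ker (rAnnToQuotient a)) := .of_equiv (kerRAnnToQuotientEquiv a).symm
  obtain ⟨θ, hθ⟩ := (rAnnToQuotient a).exists_bijective_add_comp _
    (range_rAnnToQuotient_sup ha.symm)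
    ((quotientRangeRAnnToQuotientEquiv a).trans (κ.symm.trans (kerRAnnToQuotientEquiv a).symm))
  refine isSpecialClean_of_bijective ha.symm
    ((rAnn R a).subtype + mulLeft Rᵐᵒᵖ (x * a) ∘ₗ θ) (fun k => ?_) ?_
  · rw [LinearMap.add_apply, mul_add, Submodule.subtype_apply, one_sub_mul_of_mem_rAnn k.2,
      LinearMap.comp_apply, mulLeft_apply, ← mul_assoc,
      (isIdempotentElem_mul ha.symm).one_sub_mul_self, zero_mul, add_zero]
  · rwa [comp_add, ← LinearMap.comp_assoc]
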